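/- arXiv:0707.3950 — 4 statements merged into one kernel-verified Lean document; each statement's English description precedes it below -/
import Mathlib

section
/- For every positive integer n, define λ_n by H_n = (1/2)·ln(2m) + γ + 1/(12m + 6/5) + λ_n, where m := n(n+1)/2. Then 0 < λ_n < 19/(25200·m^3). -/
/-!
Let `u n = H_n - log (n (n + 1)) / 2 - 1 / (6 n (n + 1) + 6 / 5)` (`lodgeSeq`), so that
`λ_n = u n - γ`, and `b n = 19 / (3150 (n (n + 1))³) = 19 / (25200 m³)` (`lodgeBound`).
Both `u n → γ` and `b n → 0`, so it suffices to show that `u` is strictly decreasing and `u - b`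
strictly increasing for `n ≥ 1`.
With `x = 1 / (n + 1)` the logarithms in `u n - u (n + 1)` telescope to `artanh x`, and both
monotonicity claims become inequalities between `artanh x` and rational functions of `x` on
`(0, 1/2]`. These follow from the series `artanh x = ∑ x^(2j+1) / (2j+1)`, truncated after four
terms, with the tail bounded by a geometric series.
-/

open Real Filter Topology Finset

theorem Real.hasSum_artanh {x : ℝ} (hx : |x| < 1) :
    HasSum (fun j : ℕ ↦ x ^ (2 * j + 1) / (2 * j + 1)) (artanh x) := by
  have hx' := abs_lt.mp hx
  rw [artanh_eq_half_log ⟨hx'.1.le, hx'.2.le⟩, log_div (by linarith) (by linarith)]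
  have hterm : (fun j : ℕ ↦ x ^ (2 * j + 1) / (2 * j + 1)) =
      fun j : ℕ ↦ 1 / 2 * (2 * (1 / (2 * j + 1)) * x ^ (2 * j + 1)) := by
    ext j; ring
  rw [hterm]
  exact (hasSum_log_sub_log_of_abs_lt_one hx).mul_left _

theorem Real.sum_range_le_artanh {x : ℝ} (hx₀ : 0 ≤ x) (hx₁ : x < 1) (N : ℕ) :
    ∑ j ∈ range N, x ^ (2 * j + 1) / (2 * j + 1) ≤ artanh x :=
  sum_le_hasSum _ (fun _ _ ↦ by positivity) (hasSum_artanh (abs_lt.mpr ⟨by linarith, hx₁⟩))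

theorem Real.artanh_le_sum_range_add {x : ℝ} (hx₀ : 0 ≤ x) (hx₁ : x < 1) (N : ℕ) :
    artanh x ≤ ∑ j ∈ range N, x ^ (2 * j + 1) / (2 * j + 1)
      + x ^ (2 * N + 1) / ((2 * N + 1) * (1 - x ^ 2)) := by
  have hsum := (hasSum_nat_add_iff' N).mpr (hasSum_artanh (abs_lt.mpr ⟨by linarith, hx₁⟩))
  have hgeom : HasSum (fun j : ℕ ↦ x ^ (2 * N + 1) / (2 * N + 1) * (x ^ 2) ^ j)
      (x ^ (2 * N + 1) / ((2 * N + 1) * (1 - x ^ 2))) := by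
    rw [div_mul_eq_div_div, div_eq_mul_inv _ (1 - x ^ 2)]
    exact (hasSum_geometric_of_lt_one (by positivity) (by nlinarith)).mul_left _
  have htail := hasSum_le (fun j ↦ ?_) hsum hgeom
  · linarith
  · rw [← pow_mul, div_mul_eq_mul_div, ← pow_add,
      show 2 * (j + N) + 1 = 2 * N + 1 + 2 * j by ring]
    push_cast
    exact div_le_div_of_nonneg_left (by positivity) (by positivity)
      (by linarith [j.cast_nonneg (α := ℝ)])

-- The last term is what `1 / (12 m + 6 / 5)` contributes to `u n - u (n + 1)`, `x = 1 / (n + 1)`.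
noncomputable def lodgeIncrement (x : ℝ) : ℝ :=
  artanh x - x - 25 * x ^ 3 / (75 - 45 * x ^ 2 + 3 * x ^ 4)

theorem lodgeIncrement_pos {x : ℝ} (hx₀ : 0 < x) (hx : x ≤ 1 / 2) : 0 < lodgeIncrement x := by
  have hQ : 0 < 75 - 45 * x ^ 2 + 3 * x ^ 4 := by nlinarith
  have hseries := sum_range_le_artanh hx₀.le (by linarith) 4
  simp only [sum_range_succ, sum_range_zero] at hseries
  norm_num at hseries
  have hP : 0 < 95 - 204 * x ^ 2 + 15 * x ^ 4 := by nlinarith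
  have hgap : 25 * x ^ 3 / (75 - 45 * x ^ 2 + 3 * x ^ 4) < x ^ 3 / 3 + x ^ 5 / 5 + x ^ 7 / 7 := by
    rw [div_lt_iff₀ hQ]
    have key : (x ^ 3 / 3 + x ^ 5 / 5 + x ^ 7 / 7) * (75 - 45 * x ^ 2 + 3 * x ^ 4) - 25 * x ^ 3 =
        x ^ 7 * (95 - 204 * x ^ 2 + 15 * x ^ 4) / 35 := by
      ring
    have : 0 < x ^ 7 * (95 - 204 * x ^ 2 + 15 * x ^ 4) / 35 := by positivity
    linarith
  unfold lodgeIncrement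
  linarith

theorem lodgeIncrement_lt {x : ℝ} (hx₀ : 0 < x) (hx : x ≤ 1 / 2) :
    lodgeIncrement x < 19 * x ^ 7 * (3 + x ^ 2) / (1575 * (1 - x ^ 2) ^ 3) := by
  have hQ : 0 < 75 - 45 * x ^ 2 + 3 * x ^ 4 := by nlinarith
  have hy : 0 < 1 - x ^ 2 := by nlinarith
  have hseries := artanh_le_sum_range_add hx₀.le (by linarith) 4
  simp only [sum_range_succ, sum_range_zero] at hseries
  norm_num at hseries
  have hP : 0 < 7740 - 7599 * x ^ 2 + 4497 * x ^ 4 - 2280 * x ^ 6 + 150 * x ^ 8 := by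
    have hx2 : x ^ 2 ≤ 1 / 4 := by nlinarith
    have hx6 : x ^ 6 ≤ 1 / 64 := by
      have := pow_le_pow_left₀ (by positivity) hx2 3
      rw [← pow_mul] at this
      linarith
    linarith [pow_nonneg hx₀.le 4, pow_nonneg hx₀.le 8]
  have hgap : x ^ 3 / 3 + x ^ 5 / 5 + x ^ 7 / 7 + x ^ 9 / (9 * (1 - x ^ 2))
      - 25 * x ^ 3 / (75 - 45 * x ^ 2 + 3 * x ^ 4)
      < 19 * x ^ 7 * (3 + x ^ 2) / (1575 * (1 - x ^ 2) ^ 3) := by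
    rw [← sub_pos]
    have key : 19 * x ^ 7 * (3 + x ^ 2) / (1575 * (1 - x ^ 2) ^ 3)
        - (x ^ 3 / 3 + x ^ 5 / 5 + x ^ 7 / 7 + x ^ 9 / (9 * (1 - x ^ 2))
          - 25 * x ^ 3 / (75 - 45 * x ^ 2 + 3 * x ^ 4)) =
        x ^ 9 * (7740 - 7599 * x ^ 2 + 4497 * x ^ 4 - 2280 * x ^ 6 + 150 * x ^ 8)
          / (1575 * (1 - x ^ 2) ^ 3 * (75 - 45 * x ^ 2 + 3 * x ^ 4)) := by
      have hQ' := hQ.ne'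
      have hy' := hy.ne'
      generalize hq : 75 - 45 * x ^ 2 + 3 * x ^ 4 = q at hQ' ⊢
      field_simp
      rw [← hq]
      ring
    rw [key]
    positivity
  unfold lodgeIncrement
  linarith

noncomputable def lodgeSeq (n : ℕ) : ℝ :=
  harmonic n - 1 / 2 * log (n * (n + 1)) - 1 / (6 * (n * (n + 1)) + 6 / 5)

noncomputable def lodgeBound (n : ℕ) : ℝ :=
  19 / (3150 * (n * (n + 1)) ^ 3)

theorem inv_natCast_add_one_mem_Ioc {k : ℕ} (hk : 0 < k) :
    (k + 1 : ℝ)⁻¹ ∈ Set.Ioc 0 (1 / 2) := by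
  have hk₁ : (1 : ℝ) ≤ k := by exact_mod_cast hk
  refine ⟨by positivity, ?_⟩
  rw [one_div]
  exact inv_anti₀ (by norm_num) (by linarith)

theorem lodgeSeq_sub_succ {k : ℕ} (hk : 0 < k) :
    lodgeSeq k - lodgeSeq (k + 1) = lodgeIncrement ((k + 1 : ℝ)⁻¹) := by
  have hk₀ : (0 : ℝ) < k := by exact_mod_cast hk
  have hx := inv_natCast_add_one_mem_Ioc hk
  have hratio : (1 + (k + 1 : ℝ)⁻¹) / (1 - (k + 1 : ℝ)⁻¹) = (k + 2) / k := by
    rw [show 1 - (k + 1 : ℝ)⁻¹ = k / (k + 1) by field_simp; ring]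
    field_simp
    ring
  have hlog : log ((k + 1) * (k + 1 + 1) : ℝ) = log (k * (k + 1)) + log ((k + 2) / k) := by
    rw [← log_mul (by positivity) (by positivity)]
    field_simp
    ring_nf
  have hQ : 0 < 75 * (k + 1 : ℝ) ^ 4 - 45 * (k + 1) ^ 2 + 3 := by
    nlinarith [pow_pos hk₀ 2, pow_pos hk₀ 3, pow_pos hk₀ 4]
  have hrat : 1 / (6 * (k * (k + 1)) + 6 / 5) - 1 / (6 * ((k + 1) * (k + 1 + 1)) + 6 / 5)
      = 25 * (k + 1 : ℝ)⁻¹ ^ 3 / (75 - 45 * (k + 1 : ℝ)⁻¹ ^ 2 + 3 * (k + 1 : ℝ)⁻¹ ^ 4) := by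
    rw [show 75 - 45 * (k + 1 : ℝ)⁻¹ ^ 2 + 3 * (k + 1 : ℝ)⁻¹ ^ 4
        = (75 * (k + 1) ^ 4 - 45 * (k + 1) ^ 2 + 3) / (k + 1) ^ 4 by field_simp,
      div_sub_div _ _ (by positivity) (by positivity), div_div_eq_mul_div,
      div_eq_div_iff (by positivity) hQ.ne']
    field_simp
    ring
  unfold lodgeSeq lodgeIncrement
  rw [artanh_eq_half_log ⟨by linarith [hx.1], by linarith [hx.2]⟩, hratio, harmonic_succ]
  push_cast
  rw [hlog]
  linear_combination -hrat

theorem lodgeBound_sub_succ {k : ℕ} (hk : 0 < k) :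
    lodgeBound k - lodgeBound (k + 1) =
      19 * (k + 1 : ℝ)⁻¹ ^ 7 * (3 + (k + 1 : ℝ)⁻¹ ^ 2) / (1575 * (1 - (k + 1 : ℝ)⁻¹ ^ 2) ^ 3) := by
  have hk₀ : (0 : ℝ) < k := by exact_mod_cast hk
  unfold lodgeBound
  rw [show 1 - (k + 1 : ℝ)⁻¹ ^ 2 = k * (k + 2) / (k + 1) ^ 2 by field_simp; ring]
  push_cast
  field_simp
  ring

theorem lt_of_tendsto_of_succ_lt {α : Type*} [PartialOrder α] [TopologicalSpace α]
    [OrderClosedTopology α] {u : ℕ → α} {a : α} {n : ℕ} (hu : Tendsto u atTop (𝓝 a))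
    (hsucc : ∀ k, n ≤ k → u (k + 1) < u k) : a < u n := by
  have hanti : StrictAnti fun j ↦ u (j + n) :=
    strictAnti_nat_of_succ_lt fun j ↦ by simpa [add_right_comm] using hsucc (j + n) (by omega)
  calc a ≤ u (1 + n) := hanti.antitone.le_of_tendsto ((tendsto_add_atTop_iff_nat n).2 hu) 1
    _ < u n := by simpa using hanti zero_lt_one

theorem tendsto_natCast_mul_succ_atTop :
    Tendsto (fun n : ℕ ↦ (n * (n + 1) : ℝ)) atTop atTop :=
  tendsto_natCast_atTop_atTop.atTop_mul_atTop₀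
    (tendsto_atTop_add_const_right _ 1 tendsto_natCast_atTop_atTop)

theorem tendsto_lodgeSeq : Tendsto lodgeSeq atTop (𝓝 eulerMascheroniConstant) := by
  have hcorr : Tendsto (fun n : ℕ ↦ 1 / (6 * (n * (n + 1) : ℝ) + 6 / 5)) atTop (𝓝 0) :=
    tendsto_const_nhds.div_atTop <|
      tendsto_atTop_add_const_right _ _ (tendsto_natCast_mul_succ_atTop.const_mul_atTop (by norm_num))
  have hmean := ((tendsto_harmonic_sub_log.add tendsto_harmonic_sub_log_add_one).const_mul
    (1 / 2)).sub hcorr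
  rw [show 1 / 2 * (eulerMascheroniConstant + eulerMascheroniConstant) - 0 =
    eulerMascheroniConstant by ring] at hmean
  refine hmean.congr' ?_
  filter_upwards [eventually_ne_atTop 0] with n hn
  rw [lodgeSeq, log_mul (by exact_mod_cast hn) (by positivity)]
  ring

theorem tendsto_lodgeBound : Tendsto lodgeBound atTop (𝓝 0) :=
  tendsto_const_nhds.div_atTop <|
    ((tendsto_pow_atTop (by norm_num)).comp tendsto_natCast_mul_succ_atTop).const_mul_atTop
      (by norm_num)

theorem lodgeSeq_succ_lt {k : ℕ} (hk : 0 < k) : lodgeSeq (k + 1) < lodgeSeq k := by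
  have hx := inv_natCast_add_one_mem_Ioc hk
  linarith [lodgeSeq_sub_succ hk, lodgeIncrement_pos hx.1 hx.2]

theorem lodgeSeq_sub_succ_lt {k : ℕ} (hk : 0 < k) :
    lodgeSeq k - lodgeSeq (k + 1) < lodgeBound k - lodgeBound (k + 1) := by
  have hx := inv_natCast_add_one_mem_Ioc hk
  rw [lodgeSeq_sub_succ hk, lodgeBound_sub_succ hk]
  exact lodgeIncrement_lt hx.1 hx.2

theorem lodge_lambda_bounds (n : ℕ) (hn : 1 ≤ n) :
    0 < (harmonic n : ℝ) -
          ((1 / 2) * Real.log (2 * ((n * (n + 1) : ℝ) / 2)) + Real.eulerMascheroniConstant +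
            1 / (12 * ((n * (n + 1) : ℝ) / 2) + 6 / 5)) ∧
      (harmonic n : ℝ) -
          ((1 / 2) * Real.log (2 * ((n * (n + 1) : ℝ) / 2)) + Real.eulerMascheroniConstant +
            1 / (12 * ((n * (n + 1) : ℝ) / 2) + 6 / 5)) <
        19 / (25200 * ((n * (n + 1) : ℝ) / 2) ^ 3) := by
  have hlower : eulerMascheroniConstant < lodgeSeq n :=
    lt_of_tendsto_of_succ_lt tendsto_lodgeSeq fun k hk ↦ lodgeSeq_succ_lt (hn.trans hk)
  have hupper : 0 - eulerMascheroniConstant < lodgeBound n - lodgeSeq n :=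
    lt_of_tendsto_of_succ_lt (tendsto_lodgeBound.sub tendsto_lodgeSeq) fun k hk ↦ by
      linarith [lodgeSeq_sub_succ_lt (hn.trans hk)]
  have hlambda : (harmonic n : ℝ) - ((1 / 2) * log (2 * ((n * (n + 1) : ℝ) / 2)) +
      eulerMascheroniConstant + 1 / (12 * ((n * (n + 1) : ℝ) / 2) + 6 / 5)) =
      lodgeSeq n - eulerMascheroniConstant := by
    unfold lodgeSeq; ring_nf
  have hbound : 19 / (25200 * ((n * (n + 1) : ℝ) / 2) ^ 3) = lodgeBound n := by
    unfold lodgeBound; ring_nf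
  rw [hlambda, hbound]
  constructor <;> linarith
end

section
/- For every natural number n ≥ 1, define d_n by H_n = ln(n + 1/2) + γ + 1/(24(n + 1/2)^2 + d_n). Then the sequence {d_n} is strictly monotonically increasing. -/
/-!
Write `R n = H_n - log (n + 1/2) - γ` and `x = n + 1/2`, so that `d_n = 1 / R n - 24 x²`.
The step `R n - R (n + 1) = log (1 + 1/x) - 2/(2x + 1)` is the series
`∑_{k ≥ 1} 2/(2k+1) (2x+1)^(-(2k+1))`; its first three terms and a geometric bound on the rest
determine it up to `O(x⁻⁹)`. As `R n → 0`, summing these bounds over `n, n + 1, …` gives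
`0 < R n ≤ 1/(24x²) - 7/(960x⁴) + 31/(8064x⁶)`, a truncation of the asymptotic expansion of `R n`.
Finally `d_n < d_{n+1}` means `R n - R (n + 1) > 48 (n + 1) R n R (n + 1)`; writing
`R n = R (n + 1) + (R n - R (n + 1))`, the upper bound on `R (n + 1)` and the lower bound on the
step reduce this to a polynomial inequality in `x`.
-/

open Real Filter Topology Finset

namespace Real

theorem sum_le_log_one_add_inv {a : ℝ} (ha : 0 < a) (N : ℕ) :
    ∑ k ∈ range N, 2 * (1 / (2 * k + 1)) * (1 / (2 * a + 1)) ^ (2 * k + 1) ≤ log (1 + a⁻¹) :=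
  sum_le_hasSum _ (fun k _ => by positivity) (hasSum_log_one_add_inv ha)

theorem log_one_add_inv_le {a : ℝ} (ha : 0 < a) (N : ℕ) :
    log (1 + a⁻¹) ≤ ∑ k ∈ range N, 2 * (1 / (2 * k + 1)) * (1 / (2 * a + 1)) ^ (2 * k + 1) +
      2 / (2 * N + 1) * (1 / (2 * a + 1)) ^ (2 * N + 1) / (1 - (1 / (2 * a + 1)) ^ 2) := by
  have tail := (hasSum_nat_add_iff' N).mpr (hasSum_log_one_add_inv ha)
  set t := 1 / (2 * a + 1)
  have ht : 0 < t := by positivity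
  have ht1 : t ^ 2 < 1 :=
    pow_lt_one₀ ht.le (by rw [div_lt_one (by positivity)]; linarith) two_ne_zero
  have geom := (hasSum_geometric_of_lt_one (by positivity) ht1).mul_left
    (2 / (2 * N + 1) * t ^ (2 * N + 1))
  have := hasSum_le (fun k => ?_) tail geom
  · rw [← div_eq_mul_inv] at this
    linarith
  · rw [show t ^ (2 * (k + N) + 1) = t ^ (2 * N + 1) * (t ^ 2) ^ k by ring, ← mul_assoc,
      mul_one_div]
    gcongr
    linarith

end Real

theorem le_of_tendsto_of_sub_succ_le {f g : ℕ → ℝ} {a : ℝ} (hf : Tendsto f atTop (𝓝 a))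
    (hg : Tendsto g atTop (𝓝 a)) {n : ℕ} (h : ∀ k ≥ n, f k - f (k + 1) ≤ g k - g (k + 1)) :
    f n ≤ g n := by
  have hanti : Antitone fun k => g (k + n) - f (k + n) := antitone_nat_of_succ_le fun k => by
    have := h (k + n) (Nat.le_add_left n k)
    rw [Nat.add_right_comm]
    linarith
  have hlim : Tendsto (fun k => g (k + n) - f (k + n)) atTop (𝓝 0) := by
    simpa using (tendsto_add_atTop_iff_nat n).mpr (hg.sub hf)
  simpa using hanti.le_of_tendsto hlim 0

theorem lt_one_div_sub_one_div_add {c e D U L : ℝ} (he : 0 < e) (heU : e ≤ U) (hLD : L ≤ D)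
    (hL : 0 < L) (hc : 0 ≤ c) (hUL : c * U * (U + L) < L) : c < 1 / e - 1 / (e + D) := by
  have hcU : c * U < 1 := by nlinarith
  -- `D - c e (e + D) = D (1 - c e) - c e² ≥ L (1 - c U) - c U² > 0`
  have hkey : c * e * (e + D) < D := by
    nlinarith [mul_le_mul_of_nonneg_left heU hc, mul_nonneg (sub_nonneg.2 hLD) (sub_nonneg.2 heU)]
  have hpos : 0 < e + D := by linarith
  rw [div_sub_div _ _ he.ne' hpos.ne', lt_div_iff₀ (mul_pos he hpos)]
  linarith

noncomputable def gapLower (x : ℝ) : ℝ :=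
  2 / 3 * (1 / (2 * x + 1)) ^ 3 + 2 / 5 * (1 / (2 * x + 1)) ^ 5 + 2 / 7 * (1 / (2 * x + 1)) ^ 7

theorem gapLower_pos {x : ℝ} (hx : 0 < x) : 0 < gapLower x := by
  unfold gapLower
  positivity

theorem sum_range_four_eq_add_gapLower (x : ℝ) :
    ∑ k ∈ range 4, 2 * (1 / (2 * k + 1)) * (1 / (2 * x + 1)) ^ (2 * k + 1) =
      2 / (2 * x + 1) + gapLower x := by
  simp only [sum_range_succ, sum_range_zero, gapLower]
  norm_num
  ring

theorem gapLower_le_log_sub {x : ℝ} (hx : 0 < x) :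
    gapLower x ≤ log (1 + x⁻¹) - 2 / (2 * x + 1) := by
  have h := sum_le_log_one_add_inv hx 4
  rw [sum_range_four_eq_add_gapLower] at h
  linarith

theorem log_sub_le_gapLower_add {x : ℝ} (hx : 0 < x) :
    log (1 + x⁻¹) - 2 / (2 * x + 1) ≤ gapLower x + 1 / (18 * x * (x + 1) * (2 * x + 1) ^ 7) := by
  have h := log_one_add_inv_le hx 4
  have h2x : 2 * x + 1 ≠ 0 := by positivity
  have tail : 2 / (2 * ((4 : ℕ) : ℝ) + 1) * (1 / (2 * x + 1)) ^ (2 * 4 + 1) /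
      (1 - (1 / (2 * x + 1)) ^ 2) = 1 / (18 * x * (x + 1) * (2 * x + 1) ^ 7) := by
    rw [show 1 - (1 / (2 * x + 1)) ^ 2 = 4 * x * (x + 1) / (2 * x + 1) ^ 2 by field_simp; ring]
    push_cast
    field_simp
    norm_num
  rw [sum_range_four_eq_add_gapLower, tail] at h
  linarith

noncomputable def remainderApprox (x : ℝ) : ℝ :=
  1 / (24 * x ^ 2) - 7 / (960 * x ^ 4) + 31 / (8064 * x ^ 6)

theorem tendsto_remainderApprox_atTop : Tendsto remainderApprox atTop (𝓝 0) := by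
  have h (c a : ℝ) (m : ℕ) (ha : 0 < a) (hm : m ≠ 0) :
      Tendsto (fun x : ℝ => c / (a * x ^ m)) atTop (𝓝 0) :=
    tendsto_const_nhds.div_atTop ((tendsto_pow_atTop hm).const_mul_atTop ha)
  have := ((h 1 24 2 (by norm_num) (by norm_num)).sub
    (h 7 960 4 (by norm_num) (by norm_num))).add (h 31 8064 6 (by norm_num) (by norm_num))
  rwa [sub_zero, add_zero] at this

/- In the next two inequalities, clearing denominators and substituting `x = 3/2 + s` (resp.
leaving `x` as is) turns the difference of the two sides into a polynomial in `s` (resp. `x`) with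
positive coefficients. -/

theorem gapLower_add_le_remainderApprox_sub {x : ℝ} (hx : 3 / 2 ≤ x) :
    gapLower x + 1 / (18 * x * (x + 1) * (2 * x + 1) ^ 7) ≤
      remainderApprox x - remainderApprox (x + 1) := by
  obtain ⟨s, hs, rfl⟩ : ∃ s, 0 ≤ s ∧ x = 3 / 2 + s := ⟨x - 3 / 2, by linarith, by ring⟩
  unfold gapLower remainderApprox
  rw [← sub_nonneg]
  field_simp
  ring_nf
  positivity

theorem mul_remainderApprox_lt_gapLower {x : ℝ} (hx : 0 ≤ x) :
    24 * (2 * x + 1) * remainderApprox (x + 1) * (remainderApprox (x + 1) + gapLower x) <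
      gapLower x := by
  unfold gapLower remainderApprox
  rw [← sub_pos]
  field_simp
  ring_nf
  positivity

noncomputable def harmonicRemainder (n : ℕ) : ℝ :=
  harmonic n - log (n + 1 / 2) - eulerMascheroniConstant

theorem harmonicRemainder_sub_succ (n : ℕ) :
    harmonicRemainder n - harmonicRemainder (n + 1) =
      log (1 + ((n : ℝ) + 1 / 2)⁻¹) - 2 / (2 * ((n : ℝ) + 1 / 2) + 1) := by
  have hx : (0 : ℝ) < n + 1 / 2 := by positivity
  rw [show 1 + ((n : ℝ) + 1 / 2)⁻¹ = (n + 1 + 1 / 2) / (n + 1 / 2) by field_simp; ring,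
    log_div (by positivity) hx.ne', harmonicRemainder, harmonicRemainder, harmonic_succ]
  push_cast
  field_simp
  ring

theorem tendsto_harmonicRemainder : Tendsto harmonicRemainder atTop (𝓝 0) := by
  have h := (tendsto_harmonic_sub_log.sub_const eulerMascheroniConstant).sub
    ((tendsto_log_comp_add_sub_log (1 / 2)).comp tendsto_natCast_atTop_atTop)
  rw [sub_self, sub_zero] at h
  refine h.congr fun n => ?_
  simp only [Function.comp, harmonicRemainder]
  ring

theorem gapLower_le_harmonicRemainder_sub_succ (n : ℕ) :
    gapLower (n + 1 / 2) ≤ harmonicRemainder n - harmonicRemainder (n + 1) :=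
  harmonicRemainder_sub_succ n ▸ gapLower_le_log_sub (by positivity)

theorem strictAnti_harmonicRemainder : StrictAnti harmonicRemainder :=
  strictAnti_nat_of_succ_lt fun n => by
    linarith [gapLower_pos (x := n + 1 / 2) (by positivity), gapLower_le_harmonicRemainder_sub_succ n]

theorem harmonicRemainder_pos (n : ℕ) : 0 < harmonicRemainder n :=
  (strictAnti_harmonicRemainder.antitone.le_of_tendsto tendsto_harmonicRemainder (n + 1)).trans_lt
    (strictAnti_harmonicRemainder n.lt_succ_self)

theorem harmonicRemainder_le_remainderApprox {n : ℕ} (hn : 1 ≤ n) :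
    harmonicRemainder n ≤ remainderApprox (n + 1 / 2) := by
  have hlim : Tendsto (fun k : ℕ => remainderApprox (k + 1 / 2)) atTop (𝓝 0) :=
    tendsto_remainderApprox_atTop.comp
      (tendsto_atTop_add_const_right _ _ tendsto_natCast_atTop_atTop)
  refine le_of_tendsto_of_sub_succ_le tendsto_harmonicRemainder hlim fun k hk => ?_
  have hx : (3 / 2 : ℝ) ≤ k + 1 / 2 := by
    have : (1 : ℝ) ≤ k := by exact_mod_cast hn.trans hk
    linarith
  rw [harmonicRemainder_sub_succ, Nat.cast_succ, add_right_comm]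
  exact (log_sub_le_gapLower_add (by linarith)).trans (gapLower_add_le_remainderApprox_sub hx)

theorem one_div_harmonicRemainder_sub_lt_succ (n : ℕ) :
    1 / harmonicRemainder n - 24 * ((n : ℝ) + 1 / 2) ^ 2 <
      1 / harmonicRemainder (n + 1) - 24 * (((n + 1 : ℕ) : ℝ) + 1 / 2) ^ 2 := by
  have hupper := harmonicRemainder_le_remainderApprox (Nat.le_add_left 1 n)
  rw [Nat.cast_succ, add_right_comm] at hupper ⊢
  have h := lt_one_div_sub_one_div_add (harmonicRemainder_pos (n + 1)) hupper
    (gapLower_le_harmonicRemainder_sub_succ n) (gapLower_pos (by positivity)) (by positivity)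
    (mul_remainderApprox_lt_gapLower (by positivity))
  rw [add_sub_cancel] at h
  linarith

theorem d_strictMono :
    StrictMonoOn
      (fun n : ℕ =>
        1 / ((harmonic n : ℝ) - Real.log (n + 1 / 2) - Real.eulerMascheroniConstant) -
          24 * (n + 1 / 2 : ℝ) ^ 2)
      (Set.Ici 1) :=
  (strictMono_nat_of_lt_succ one_div_harmonicRemainder_sub_lt_succ).strictMonoOn _
end

section
/- For every natural number n ≥ 1, let d_n := 1/(H_n − ln(n + 1/2) − γ) − 24(n + 1/2)^2. Then d_n converges to 21/5 as n → ∞. -/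
/-!
Write `N = n + 1/2` and `ε n = H_n - log N - γ`. Then `ε n = 1/(24 N²) - 7/(960 N⁴) + O(N⁻⁶)`,
and these two terms alone determine `1/ε n - 24 N² → 21/5`. To make this rigorous we trap `ε n`
between `A₀ N` and `A₁ N`, where `A_c N = 1/(24 N²) - 7/(960 N⁴) + c/N⁵`. All three sequences
tend to `0`, so it suffices to compare their consecutive differences. For `ε` these are
`log (1 + 1/N) - 1/(n+1) = 2 artanh (1/(2n+2)) - 1/(n+1)`, which the artanh series determines up to
`O(n⁻⁷)`; for `A_c` they are rational functions of `n`, and the two comparisons reduce to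
polynomial inequalities whose coefficients in `n` are all nonnegative.
-/

open Real Filter Topology Finset

theorem le_of_tendsto_of_sub_succ_le_s12 {α : Type*} [AddCommGroup α] [PartialOrder α]
    [IsOrderedAddMonoid α] [TopologicalSpace α] [OrderClosedTopology α]
    [IsTopologicalAddGroup α] {a b : ℕ → α} {l : α}
    (ha : Tendsto a atTop (𝓝 l)) (hb : Tendsto b atTop (𝓝 l))
    (h : ∀ n, a n - a (n + 1) ≤ b n - b (n + 1)) (n : ℕ) : a n ≤ b n := by
  have hanti : Antitone fun k => b k - a k := antitone_nat_of_succ_le fun k => by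
    have := h k
    rw [sub_le_sub_iff] at this ⊢
    rwa [add_comm]
  exact sub_nonneg.mp (hanti.le_of_tendsto (by simpa using hb.sub ha) n)

theorem Real.sum_range_le_log_one_add_inv {a : ℝ} (ha : 0 < a) (m : ℕ) :
    ∑ k ∈ range m, 2 * (1 / (2 * k + 1)) * (1 / (2 * a + 1)) ^ (2 * k + 1)
      ≤ log (1 + a⁻¹) :=
  sum_le_hasSum _ (fun k _ => by positivity) (hasSum_log_one_add_inv ha)

theorem Real.log_one_add_inv_le_sum_range_add {a : ℝ} (ha : 0 < a) (m : ℕ) :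
    log (1 + a⁻¹) ≤ ∑ k ∈ range m, 2 * (1 / (2 * k + 1)) * (1 / (2 * a + 1)) ^ (2 * k + 1)
      + 2 / (2 * m + 1) * (1 / (2 * a + 1)) ^ (2 * m + 1) / (1 - (1 / (2 * a + 1)) ^ 2) := by
  set y := 1 / (2 * a + 1) with hy
  have hy0 : 0 ≤ y := by positivity
  have hy1 : y < 1 := by rw [hy, div_lt_one (by linarith)]; linarith
  have htail := (hasSum_nat_add_iff' m).mpr (hasSum_log_one_add_inv ha)
  have hgeom := (hasSum_geometric_of_lt_one (pow_nonneg hy0 2) (by nlinarith)).mul_left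
    (2 / (2 * m + 1) * y ^ (2 * m + 1))
  have := hasSum_le (fun k => ?_) htail hgeom
  · rw [← div_eq_mul_inv] at this
    linarith
  · calc 2 * (1 / (2 * ((k + m : ℕ) : ℝ) + 1)) * y ^ (2 * (k + m) + 1)
        = 2 * (1 / (2 * ((k + m : ℕ) : ℝ) + 1)) * (y ^ (2 * m + 1) * (y ^ 2) ^ k) := by ring
      _ ≤ 2 * (1 / (2 * m + 1)) * (y ^ (2 * m + 1) * (y ^ 2) ^ k) := by
        gcongr
        linarith
      _ = 2 / (2 * m + 1) * y ^ (2 * m + 1) * (y ^ 2) ^ k := by ring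

noncomputable def eulerApprox (c N : ℝ) : ℝ := 1 / (24 * N ^ 2) - 7 / (960 * N ^ 4) + c / N ^ 5

theorem eulerApprox_pos {c N : ℝ} (hc : 0 ≤ c) (hN : 1 / 2 ≤ N) : 0 < eulerApprox c N := by
  have hN0 : 0 < N := by linarith
  have : eulerApprox c N = (N * (40 * N ^ 2 - 7) + 960 * c) / (960 * N ^ 5) := by
    unfold eulerApprox
    field_simp
    ring
  rw [this]
  have : 0 < 40 * N ^ 2 - 7 := by nlinarith
  positivity

theorem tendsto_sq_mul_eulerApprox (c : ℝ) :
    Tendsto (fun N => N ^ 2 * eulerApprox c N) atTop (𝓝 (1 / 24)) := by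
  have h := tendsto_inv_atTop_zero (𝕜 := ℝ)
  have hlim := ((h.pow 2).const_mul (7 / 960)).const_sub (1 / 24) |>.add ((h.pow 3).const_mul c)
  rw [zero_pow two_ne_zero, zero_pow three_ne_zero, mul_zero, mul_zero, sub_zero, add_zero]
    at hlim
  refine hlim.congr' ?_
  filter_upwards [eventually_gt_atTop 0] with N hN
  unfold eulerApprox
  field_simp

theorem tendsto_eulerApprox (c : ℝ) : Tendsto (eulerApprox c) atTop (𝓝 0) := by
  have h := (tendsto_sq_mul_eulerApprox c).mul ((tendsto_inv_atTop_zero (𝕜 := ℝ)).pow 2)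
  rw [zero_pow two_ne_zero, mul_zero] at h
  refine h.congr' ?_
  filter_upwards [eventually_gt_atTop 0] with N hN
  field_simp

theorem tendsto_inv_eulerApprox_sub (c : ℝ) :
    Tendsto (fun N => (eulerApprox c N)⁻¹ - 24 * N ^ 2) atTop (𝓝 (21 / 5)) := by
  have hnum := ((tendsto_inv_atTop_zero (𝕜 := ℝ)).const_mul (24 * c)).const_sub (7 / 40)
  have hden := tendsto_sq_mul_eulerApprox c
  have hlim := hnum.div hden (by norm_num)
  rw [mul_zero, sub_zero, show (7 / 40 : ℝ) / (1 / 24) = 21 / 5 by norm_num] at hlim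
  refine hlim.congr' ?_
  filter_upwards [eventually_gt_atTop 0, hden.eventually_ne (by norm_num : (1 / 24 : ℝ) ≠ 0)]
    with N hN hne
  have hA : eulerApprox c N ≠ 0 := right_ne_zero_of_mul hne
  change (7 / 40 - 24 * c * N⁻¹) / (N ^ 2 * eulerApprox c N) = _
  rw [div_eq_iff hne]
  field_simp
  unfold eulerApprox
  field_simp
  ring

theorem eulerApprox_zero_sub_le {u : ℝ} (hu : 1 ≤ u) :
    eulerApprox 0 (u - 1 / 2) - eulerApprox 0 (u + 1 / 2) ≤
      1 / (12 * u ^ 3) + 1 / (80 * u ^ 5) := by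
  obtain ⟨v, hv, rfl⟩ : ∃ v : ℝ, 0 ≤ v ∧ u = v + 1 := ⟨u - 1, by linarith, by ring⟩
  unfold eulerApprox
  rw [← sub_nonneg]
  have e : (v + 1 - 1 / 2) = (2 * v + 1) / 2 := by ring
  have e' : (v + 1 + 1 / 2) = (2 * v + 3) / 2 := by ring
  rw [e, e']
  field_simp
  ring_nf
  positivity

theorem le_eulerApprox_one_sub {u : ℝ} (hu : 1 ≤ u) :
    1 / (12 * u ^ 3) + 1 / (80 * u ^ 5) + 1 / (336 * u ^ 7) ≤
      eulerApprox 1 (u - 1 / 2) - eulerApprox 1 (u + 1 / 2) := by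
  obtain ⟨v, hv, rfl⟩ : ∃ v : ℝ, 0 ≤ v ∧ u = v + 1 := ⟨u - 1, by linarith, by ring⟩
  unfold eulerApprox
  rw [← sub_nonneg]
  have e : (v + 1 - 1 / 2) = (2 * v + 1) / 2 := by ring
  have e' : (v + 1 + 1 / 2) = (2 * v + 3) / 2 := by ring
  rw [e, e']
  field_simp
  ring_nf
  positivity

noncomputable def eulerRemainder (n : ℕ) : ℝ :=
  harmonic n - log (n + 1 / 2) - eulerMascheroniConstant

theorem tendsto_eulerRemainder : Tendsto eulerRemainder atTop (𝓝 0) := by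
  have hlo := tendsto_harmonic_sub_log_add_one.sub_const eulerMascheroniConstant
  have hhi := tendsto_harmonic_sub_log.sub_const eulerMascheroniConstant
  rw [sub_self] at hlo hhi
  refine tendsto_of_tendsto_of_tendsto_of_le_of_le' hlo hhi ?_ ?_
  · filter_upwards with n
    unfold eulerRemainder
    gcongr
    linarith
  · filter_upwards [eventually_ge_atTop 1] with n hn
    unfold eulerRemainder
    have : (0 : ℝ) < n := by exact_mod_cast hn
    gcongr
    linarith

theorem eulerRemainder_sub_succ (n : ℕ) :
    eulerRemainder n - eulerRemainder (n + 1) = log (1 + (n + 1 / 2 : ℝ)⁻¹) - 1 / (n + 1) := by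
  have hpos : (0 : ℝ) < n + 1 / 2 := by positivity
  have : (1 + (n + 1 / 2 : ℝ)⁻¹) = ((n + 1 : ℕ) + 1 / 2) / (n + 1 / 2) := by
    push_cast
    field_simp
    ring
  rw [this, log_div (by positivity) hpos.ne']
  unfold eulerRemainder
  push_cast [harmonic_succ]
  ring

theorem sum_range_three_log_one_add_inv_series (n : ℕ) :
    ∑ k ∈ range 3, 2 * (1 / (2 * k + 1)) * (1 / (2 * (n + 1 / 2 : ℝ) + 1)) ^ (2 * k + 1) =
      1 / (n + 1) + 1 / (12 * (n + 1 : ℝ) ^ 3) + 1 / (80 * (n + 1 : ℝ) ^ 5) := by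
  have e : 2 * (n + 1 / 2 : ℝ) + 1 = 2 * (n + 1) := by ring
  have hu : (n + 1 : ℝ) ≠ 0 := by positivity
  norm_num [sum_range_succ, e]
  field_simp
  ring

theorem le_eulerRemainder_sub_succ (n : ℕ) :
    1 / (12 * (n + 1 : ℝ) ^ 3) + 1 / (80 * (n + 1 : ℝ) ^ 5) ≤
      eulerRemainder n - eulerRemainder (n + 1) := by
  have h := sum_range_le_log_one_add_inv (a := n + 1 / 2) (by positivity) 3
  rw [sum_range_three_log_one_add_inv_series] at h
  rw [eulerRemainder_sub_succ]
  linarith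

theorem eulerRemainder_sub_succ_le (n : ℕ) :
    eulerRemainder n - eulerRemainder (n + 1) ≤
      1 / (12 * (n + 1 : ℝ) ^ 3) + 1 / (80 * (n + 1 : ℝ) ^ 5) + 1 / (336 * (n + 1 : ℝ) ^ 7) := by
  have h := log_one_add_inv_le_sum_range_add (a := n + 1 / 2) (by positivity) 3
  rw [sum_range_three_log_one_add_inv_series] at h
  have htail : 2 / (2 * ((3 : ℕ) : ℝ) + 1) * (1 / (2 * (n + 1 / 2 : ℝ) + 1)) ^ (2 * 3 + 1) /
      (1 - (1 / (2 * (n + 1 / 2 : ℝ) + 1)) ^ 2) ≤ 1 / (336 * (n + 1 : ℝ) ^ 7) := by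
    -- `y = 1 / (2n + 2) ≤ 1/2` gives `2 y⁷ / (7 (1 - y²)) ≤ 8 y⁷ / 21 = 1 / (336 (n + 1)⁷)`
    have e : 2 * (n + 1 / 2 : ℝ) + 1 = 2 * (n + 1) := by ring
    have hu : (1 : ℝ) ≤ n + 1 := by simp
    norm_num [e]
    rw [div_le_iff₀ (by field_simp; nlinarith)]
    field_simp
    nlinarith
  rw [eulerRemainder_sub_succ]
  linarith

theorem tendsto_natCast_add_one_half_atTop :
    Tendsto (fun n : ℕ => (n + 1 / 2 : ℝ)) atTop atTop :=
  tendsto_atTop_add_const_right _ _ tendsto_natCast_atTop_atTop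

theorem eulerApprox_zero_le_eulerRemainder (n : ℕ) :
    eulerApprox 0 (n + 1 / 2) ≤ eulerRemainder n := by
  refine le_of_tendsto_of_sub_succ_le_s12 ((tendsto_eulerApprox 0).comp
    tendsto_natCast_add_one_half_atTop) tendsto_eulerRemainder (fun k => ?_) n
  have h := eulerApprox_zero_sub_le (u := k + 1) (by simp)
  rw [show (k + 1 : ℝ) - 1 / 2 = k + 1 / 2 by ring] at h
  simp only [Function.comp_apply, Nat.cast_succ]
  linarith [le_eulerRemainder_sub_succ k]

theorem eulerRemainder_le_eulerApprox_one (n : ℕ) :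
    eulerRemainder n ≤ eulerApprox 1 (n + 1 / 2) := by
  refine le_of_tendsto_of_sub_succ_le_s12 tendsto_eulerRemainder ((tendsto_eulerApprox 1).comp
    tendsto_natCast_add_one_half_atTop) (fun k => ?_) n
  have h := le_eulerApprox_one_sub (u := k + 1) (by simp)
  rw [show (k + 1 : ℝ) - 1 / 2 = k + 1 / 2 by ring] at h
  simp only [Function.comp_apply, Nat.cast_succ]
  linarith [eulerRemainder_sub_succ_le k]

theorem d_tendsto :
    Filter.Tendsto
      (fun n : ℕ =>
        1 / ((harmonic n : ℝ) - Real.log (n + 1 / 2) - Real.eulerMascheroniConstant) -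
          24 * (n + 1 / 2 : ℝ) ^ 2)
      Filter.atTop (nhds (21 / 5)) := by
  have hN := tendsto_natCast_add_one_half_atTop
  have hpos (n : ℕ) : 0 < eulerApprox 0 (n + 1 / 2) :=
    eulerApprox_pos le_rfl (by simp)
  change Tendsto (fun n : ℕ => 1 / eulerRemainder n - 24 * (n + 1 / 2 : ℝ) ^ 2) atTop _
  simp only [one_div (eulerRemainder _)]
  refine tendsto_of_tendsto_of_tendsto_of_le_of_le ((tendsto_inv_eulerApprox_sub 1).comp hN)
    ((tendsto_inv_eulerApprox_sub 0).comp hN) (fun n => ?_) (fun n => ?_)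
  · exact sub_le_sub_right (inv_anti₀ ((hpos n).trans_le (eulerApprox_zero_le_eulerRemainder n))
      (eulerRemainder_le_eulerApprox_one n)) _
  · exact sub_le_sub_right (inv_anti₀ (hpos n) (eulerApprox_zero_le_eulerRemainder n)) _
end

section
/- For every real x > 0: 1/(3x^2) − 1/(3x^3) + 4/(15x^4) − 1/(5x^5) + 10/(63x^6) − 1/(7x^7) < 2Ψ(x+1) − ln(x(x+1)) < 1/(3x^2) − 1/(3x^3) + 4/(15x^4) − 1/(5x^5) + 10/(63x^6), where Ψ is the digamma function. -/
open Real

/-- The digamma function `Ψ(x) = Γ'(x)/Γ(x) = (log ∘ Γ)'(x)`. -/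
noncomputable def digamma (x : ℝ) : ℝ := deriv (fun y : ℝ => Real.log (Real.Gamma y)) x

/-!
Let `D(t) = 2Ψ(t+1) - log (t(t+1))`. The recurrence `Ψ(t+1) = Ψ(t) + 1/t` gives
`D(t) - D(t+1) = log (1+w) - log (1-w) - 2w` with `w = 1/(t+1)`, and truncating the series
`log (1+w) - log (1-w) = ∑ 2w^(2k+1)/(2k+1)` (bounding its tail by a geometric series) pins this
difference between two rational functions of `t`. They dominate the corresponding differences of
the two bounds `R`, so `t ↦ D(t) - R(t)` moves strictly in one direction along `t, t+1, t+2, …`.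
Both `R(t)` and `D(t)` tend to `0`, the latter because convexity of `log Γ` gives
`log t ≤ Ψ(t+1) ≤ log (t+1)`; hence `D - R` has a strict sign.
-/

open Filter Topology

theorem hasDerivAt_log_Gamma {x : ℝ} (hx : 0 < x) :
    HasDerivAt (log ∘ Gamma) (digamma x) x :=
  ((differentiableAt_Gamma fun m => by linarith [m.cast_nonneg (α := ℝ)]).log
    (Gamma_pos_of_pos hx).ne').hasDerivAt

theorem digamma_add_one {x : ℝ} (hx : 0 < x) : digamma (x + 1) = digamma x + x⁻¹ := by
  have hshift : (fun y => log (Gamma (y + 1))) =ᶠ[𝓝 x] fun y => log y + log (Gamma y) := by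
    filter_upwards [eventually_gt_nhds hx] with y hy
    rw [Gamma_add_one hy.ne', log_mul hy.ne' (Gamma_pos_of_pos hy).ne']
  have hderiv : HasDerivAt (fun y => log y + log (Gamma y)) (x⁻¹ + digamma x) x :=
    (hasDerivAt_log hx.ne').add (hasDerivAt_log_Gamma hx)
  rw [digamma, ← deriv_comp_add_const, hshift.deriv_eq, hderiv.deriv, add_comm]

theorem slope_log_Gamma {y : ℝ} (hy : 0 < y) : slope (log ∘ Gamma) y (y + 1) = log y := by
  simp only [slope_def_field, Function.comp_apply, Gamma_add_one hy.ne',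
    log_mul hy.ne' (Gamma_pos_of_pos hy).ne']
  ring

theorem digamma_le_log {y : ℝ} (hy : 0 < y) : digamma y ≤ log y :=
  slope_log_Gamma hy ▸ convexOn_log_Gamma.le_slope_of_hasDerivAt hy (add_pos hy one_pos)
    (lt_add_one y) (hasDerivAt_log_Gamma hy)

theorem log_le_digamma_add_one {y : ℝ} (hy : 0 < y) : log y ≤ digamma (y + 1) :=
  slope_log_Gamma hy ▸ convexOn_log_Gamma.slope_le_of_hasDerivAt hy (add_pos hy one_pos)
    (lt_add_one y) (hasDerivAt_log_Gamma (add_pos hy one_pos))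

theorem log_one_add_sub_log_one_sub_gt {w : ℝ} (hw₀ : 0 < w) (hw₁ : w < 1) :
    2 * w + 2 * w ^ 3 / 3 + 2 * w ^ 5 / 5 + 2 * w ^ 7 / 7 < log (1 + w) - log (1 - w) := by
  have hS := hasSum_log_sub_log_of_abs_lt_one (abs_lt.2 ⟨by linarith, hw₁⟩)
  have h5 := sum_le_hasSum (Finset.range 5) (fun k _ => by positivity) hS
  simp only [Finset.sum_range_succ, Finset.sum_range_zero] at h5
  norm_num at h5
  nlinarith [pow_pos hw₀ 9]

theorem log_one_add_sub_log_one_sub_lt {w : ℝ} (hw₀ : 0 < w) (hw₁ : w < 1) :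
    log (1 + w) - log (1 - w) <
      2 * w + 2 * w ^ 3 / 3 + 2 * w ^ 5 / 5 + 2 * w ^ 7 / (7 * (1 - w ^ 2)) := by
  have hS := hasSum_log_sub_log_of_abs_lt_one (abs_lt.2 ⟨by linarith, hw₁⟩)
  have hgeom := (hasSum_geometric_of_lt_one (sq_nonneg w) (by nlinarith)).mul_left (2 * w ^ 7)
  have hterm (n : ℕ) : (2 : ℝ) * (1 / (2 * ↑(n + 3) + 1)) * w ^ (2 * (n + 3) + 1) =
      2 * w ^ 7 * (w ^ 2) ^ n / (2 * n + 7) := by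
    push_cast; ring
  have hlt := hasSum_lt (i := 1) (fun n => ?_) ?_ ((hasSum_nat_add_iff' 3).2 hS)
    (hgeom.div_const 7)
  · simp only [Finset.sum_range_succ, Finset.sum_range_zero] at hlt
    norm_num at hlt
    rw [div_mul_eq_div_div, div_right_comm, div_eq_mul_inv _ (1 - w ^ 2)]
    linarith
  · rw [hterm]
    gcongr
    linarith [n.cast_nonneg (α := ℝ)]
  · simp only [hterm]
    gcongr
    norm_num

theorem neg_of_lt_add_one_of_tendsto_zero {g : ℝ → ℝ} (hstep : ∀ t, 0 < t → g t < g (t + 1))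
    (hlim : Tendsto g atTop (𝓝 0)) {x : ℝ} (hx : 0 < x) : g x < 0 := by
  have hmono : Monotone fun n : ℕ => g (x + 1 + n) := monotone_nat_of_le_succ fun n => by
    simpa [add_assoc] using (hstep (x + 1 + n) (by positivity)).le
  have hseq : Tendsto (fun n : ℕ => g (x + 1 + n)) atTop (𝓝 0) :=
    hlim.comp (tendsto_atTop_add_const_left _ _ tendsto_natCast_atTop_atTop)
  calc g x < g (x + 1) := hstep x hx
    _ ≤ 0 := by simpa using hmono.ge_of_tendsto hseq 0

theorem tendsto_div_mul_pow_atTop_zero (c : ℝ) {a : ℝ} (ha : 0 < a) {k : ℕ} (hk : k ≠ 0) :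
    Tendsto (fun t : ℝ => c / (a * t ^ k)) atTop (𝓝 0) :=
  tendsto_const_nhds.div_atTop ((tendsto_pow_atTop hk).const_mul_atTop ha)

noncomputable def upperApprox (t : ℝ) : ℝ :=
  1 / (3 * t ^ 2) - 1 / (3 * t ^ 3) + 4 / (15 * t ^ 4) - 1 / (5 * t ^ 5) + 10 / (63 * t ^ 6)

noncomputable def lowerApprox (t : ℝ) : ℝ := upperApprox t - 1 / (7 * t ^ 7)

theorem tendsto_upperApprox_atTop : Tendsto upperApprox atTop (𝓝 0) := by
  unfold upperApprox
  have h := ((((tendsto_div_mul_pow_atTop_zero 1 (a := 3) (by norm_num) (k := 2) (by norm_num)).sub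
    (tendsto_div_mul_pow_atTop_zero 1 (a := 3) (by norm_num) (k := 3) (by norm_num))).add
    (tendsto_div_mul_pow_atTop_zero 4 (a := 15) (by norm_num) (k := 4) (by norm_num))).sub
    (tendsto_div_mul_pow_atTop_zero 1 (a := 5) (by norm_num) (k := 5) (by norm_num))).add
    (tendsto_div_mul_pow_atTop_zero 10 (a := 63) (by norm_num) (k := 6) (by norm_num))
  simpa only [sub_zero, add_zero] using h

theorem tendsto_lowerApprox_atTop : Tendsto lowerApprox atTop (𝓝 0) := by
  unfold lowerApprox
  simpa only [sub_zero] using tendsto_upperApprox_atTop.sub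
    (tendsto_div_mul_pow_atTop_zero 1 (a := 7) (by norm_num) (k := 7) (by norm_num))

theorem upperApprox_sub_upperApprox_add_one_gt {t : ℝ} (ht : 0 < t) :
    2 * (t + 1)⁻¹ ^ 3 / 3 + 2 * (t + 1)⁻¹ ^ 5 / 5 + 2 * (t + 1)⁻¹ ^ 7 / (7 * (1 - (t + 1)⁻¹ ^ 2))
      < upperApprox t - upperApprox (t + 1) := by
  rw [← sub_pos]
  have key : upperApprox t - upperApprox (t + 1) - (2 * (t + 1)⁻¹ ^ 3 / 3 +
      2 * (t + 1)⁻¹ ^ 5 / 5 + 2 * (t + 1)⁻¹ ^ 7 / (7 * (1 - (t + 1)⁻¹ ^ 2))) =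
      (100 * t + 524 * t ^ 2 + 1149 * t ^ 3 + 1364 * t ^ 4 + 904 * t ^ 5 + 315 * t ^ 6) /
        (315 * t ^ 7 * (t + 1) ^ 6 * (t + 2)) := by
    rw [show 1 - (t + 1)⁻¹ ^ 2 = t * (t + 2) / (t + 1) ^ 2 by field_simp; ring, upperApprox,
      upperApprox]
    field_simp
    ring
  rw [key]
  positivity

theorem lowerApprox_sub_lowerApprox_add_one_lt {t : ℝ} (ht : 0 < t) :
    lowerApprox t - lowerApprox (t + 1) <
      2 * (t + 1)⁻¹ ^ 3 / 3 + 2 * (t + 1)⁻¹ ^ 5 / 5 + 2 * (t + 1)⁻¹ ^ 7 / 7 := by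
  rw [← sub_pos]
  have key : 2 * (t + 1)⁻¹ ^ 3 / 3 + 2 * (t + 1)⁻¹ ^ 5 / 5 + 2 * (t + 1)⁻¹ ^ 7 / 7 -
      (lowerApprox t - lowerApprox (t + 1)) =
      (45 + 265 * t + 658 * t ^ 2 + 882 * t ^ 3 + 665 * t ^ 4 + 266 * t ^ 5) /
        (315 * t ^ 7 * (t + 1) ^ 7) := by
    unfold lowerApprox upperApprox
    field_simp
    ring
  rw [key]
  positivity

noncomputable def digammaGap (t : ℝ) : ℝ := 2 * digamma (t + 1) - log (t * (t + 1))

theorem abs_digammaGap_le {t : ℝ} (ht : 0 < t) : |digammaGap t| ≤ t⁻¹ := by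
  have ht₁ : 0 < t + 1 := by linarith
  have hlog_succ : log (t + 1) - log t ≤ t⁻¹ := by
    have := log_le_sub_one_of_pos (div_pos ht₁ ht)
    rw [log_div ht₁.ne' ht.ne'] at this
    field_simp at this ⊢
    linarith
  rw [digammaGap, log_mul ht.ne' ht₁.ne', abs_le]
  constructor <;> linarith [log_le_digamma_add_one ht, digamma_le_log ht₁]

theorem tendsto_digammaGap_atTop : Tendsto digammaGap atTop (𝓝 0) :=
  squeeze_zero_norm' ((eventually_gt_atTop 0).mono fun _ ht => abs_digammaGap_le ht)
    tendsto_inv_atTop_zero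

theorem digammaGap_sub_digammaGap_add_one {t : ℝ} (ht : 0 < t) :
    digammaGap t - digammaGap (t + 1) =
      log (1 + (t + 1)⁻¹) - log (1 - (t + 1)⁻¹) - 2 * (t + 1)⁻¹ := by
  have ht₁ : 0 < t + 1 := by linarith
  have hnum : 1 + (t + 1)⁻¹ = (t + 1 + 1) / (t + 1) := by field_simp
  have hden : 1 - (t + 1)⁻¹ = t / (t + 1) := by field_simp; ring
  rw [digammaGap, digammaGap, digamma_add_one ht₁, hnum, hden, log_div (by positivity) ht₁.ne',
    log_div ht.ne' ht₁.ne', log_mul ht.ne' ht₁.ne', log_mul ht₁.ne' (by positivity)]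
  ring

theorem digammaGap_sub_upperApprox_lt_add_one {t : ℝ} (ht : 0 < t) :
    digammaGap t - upperApprox t < digammaGap (t + 1) - upperApprox (t + 1) := by
  have hw₁ : (t + 1)⁻¹ < 1 := inv_lt_one_of_one_lt₀ (by linarith)
  linarith [digammaGap_sub_digammaGap_add_one ht, upperApprox_sub_upperApprox_add_one_gt ht,
    log_one_add_sub_log_one_sub_lt (by positivity) hw₁]

theorem lowerApprox_sub_digammaGap_lt_add_one {t : ℝ} (ht : 0 < t) :
    lowerApprox t - digammaGap t < lowerApprox (t + 1) - digammaGap (t + 1) := by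
  have hw₁ : (t + 1)⁻¹ < 1 := inv_lt_one_of_one_lt₀ (by linarith)
  linarith [digammaGap_sub_digammaGap_add_one ht, lowerApprox_sub_lowerApprox_add_one_lt ht,
    log_one_add_sub_log_one_sub_gt (by positivity) hw₁]

theorem digamma_bounds (x : ℝ) (hx : 0 < x) :
    1 / (3 * x ^ 2) - 1 / (3 * x ^ 3) + 4 / (15 * x ^ 4) - 1 / (5 * x ^ 5) +
        10 / (63 * x ^ 6) - 1 / (7 * x ^ 7) <
      2 * digamma (x + 1) - Real.log (x * (x + 1)) ∧
    2 * digamma (x + 1) - Real.log (x * (x + 1)) <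
      1 / (3 * x ^ 2) - 1 / (3 * x ^ 3) + 4 / (15 * x ^ 4) - 1 / (5 * x ^ 5) +
        10 / (63 * x ^ 6) := by
  have hlower : lowerApprox x - digammaGap x < 0 :=
    neg_of_lt_add_one_of_tendsto_zero (fun _ => lowerApprox_sub_digammaGap_lt_add_one)
      (by simpa using tendsto_lowerApprox_atTop.sub tendsto_digammaGap_atTop) hx
  have hupper : digammaGap x - upperApprox x < 0 :=
    neg_of_lt_add_one_of_tendsto_zero (fun _ => digammaGap_sub_upperApprox_lt_add_one)
      (by simpa using tendsto_digammaGap_atTop.sub tendsto_upperApprox_atTop) hx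
  rw [digammaGap, lowerApprox, upperApprox] at hlower
  rw [digammaGap, upperApprox] at hupper
  constructor <;> linarith
end
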